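/- Fix real parameters k₁, k₂, k₃, q. Let H(x,y,z) = (x² + y² + z²)/2, let J(x,y,z) be the skew-symmetric matrix with J₁₂ = 0, J₁₃ = 0, J₂₃ = −x/2, and let R(x,y,z) be the symmetric matrix with diagonal (k₁, k₂, k₃) and off-diagonal entries R₁₂ = −q, R₁₃ = −y, R₂₃ = x/2. Then for every (x,y,z) ∈ ℝ³, (J − R)∇H = (qy − k₁x + yz, qx − k₂y − xz, −k₃z + xy), i.e. the Rabinovich system is a resistive-Hamiltonian system. Moreover ∇H·((J−R)∇H) = −k₁x² − k₂y² − k₃z² + 2qxy + xyz, the divergence of this vector field is identically −(k₁+k₂+k₃), and the Poisson vector J = (x/2, 0, 0) associated to J satisfies ∇×J = 0. -/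
import Mathlib


set_option linter.unusedVariables false

open Matrix

/-- Partial derivative with respect to the first variable. -/
noncomputable def pd1 (f : ℝ → ℝ → ℝ → ℝ) (x y z : ℝ) : ℝ := deriv (fun t => f t y z) x
/-- Partial derivative with respect to the second variable. -/
noncomputable def pd2 (f : ℝ → ℝ → ℝ → ℝ) (x y z : ℝ) : ℝ := deriv (fun t => f x t z) y
/-- Partial derivative with respect to the third variable. -/
noncomputable def pd3 (f : ℝ → ℝ → ℝ → ℝ) (x y z : ℝ) : ℝ := deriv (fun t => f x y t) z

/-- Hamiltonian of the Rabinovich system. -/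
noncomputable def H (x y z : ℝ) : ℝ := (x ^ 2 + y ^ 2 + z ^ 2) / 2

/-- Gradient of `H`. -/
noncomputable def gradH (x y z : ℝ) : Fin 3 → ℝ := ![pd1 H x y z, pd2 H x y z, pd3 H x y z]

/-- Poisson matrix of the Rabinovich system. -/
noncomputable def Jmat (x y z : ℝ) : Matrix (Fin 3) (Fin 3) ℝ :=
  !![0, 0, 0; 0, 0, -x / 2; 0, x / 2, 0]

/-- Resistance matrix of the Rabinovich system. -/
noncomputable def Rmat (k₁ k₂ k₃ q : ℝ) (x y z : ℝ) : Matrix (Fin 3) (Fin 3) ℝ :=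
  !![k₁, -q, -y; -q, k₂, x / 2; -y, x / 2, k₃]

/-- The resistive-Hamiltonian vector field `(J − R)∇H`. -/
noncomputable def F (k₁ k₂ k₃ q : ℝ) (x y z : ℝ) : Fin 3 → ℝ :=
  (Jmat x y z - Rmat k₁ k₂ k₃ q x y z).mulVec (gradH x y z)

lemma pdH1 (x y z : ℝ) : pd1 H x y z = x := by
  have : HasDerivAt (fun t : ℝ => (t ^ 2 + (y ^ 2 + z ^ 2)) / 2) x x := by
    simpa using (((hasDerivAt_pow 2 x).add_const (y ^ 2 + z ^ 2)).div_const 2)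
  simpa [pd1, H, add_assoc] using this.deriv

lemma pdH2 (x y z : ℝ) : pd2 H x y z = y := by
  have : HasDerivAt (fun t : ℝ => (x ^ 2 + (t ^ 2 + z ^ 2)) / 2) y y := by
    simpa using ((((hasDerivAt_pow 2 y).add_const (z ^ 2)).const_add (x ^ 2)).div_const 2)
  simpa [pd2, H, add_assoc] using this.deriv

lemma pdH3 (x y z : ℝ) : pd3 H x y z = z := by
  have : HasDerivAt (fun t : ℝ => (x ^ 2 + y ^ 2 + t ^ 2) / 2) z z := by
    simpa using (((hasDerivAt_pow 2 z).const_add (x ^ 2 + y ^ 2)).div_const 2)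
  simpa [pd3, H] using this.deriv

lemma gradH_eq (x y z : ℝ) : gradH x y z = ![x, y, z] := by
  simp [gradH, pdH1, pdH2, pdH3]

lemma F_eq (k₁ k₂ k₃ q x y z : ℝ) :
    F k₁ k₂ k₃ q x y z =
      ![q * y - k₁ * x + y * z, q * x - k₂ * y - x * z, -k₃ * z + x * y] := by
  funext i
  fin_cases i <;>
    simp [F, gradH_eq, Jmat, Rmat, mulVec, dotProduct, Fin.sum_univ_three] <;> ring

/-- The Rabinovich system is a resistive-Hamiltonian system: `(J − R)∇H` gives its
equations of motion; moreover `∇H·((J−R)∇H) = −k₁x² − k₂y² − k₃z² + 2qxy + xyz`, the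
divergence of the vector field is identically `−(k₁+k₂+k₃)`, and the Poisson vector
`J = (x/2, 0, 0)` satisfies `∇×J = 0`. -/
theorem stmt_9 (k₁ k₂ k₃ q : ℝ) :
    (∀ x y z : ℝ, F k₁ k₂ k₃ q x y z =
      ![q * y - k₁ * x + y * z, q * x - k₂ * y - x * z, -k₃ * z + x * y]) ∧
    (∀ x y z : ℝ, gradH x y z ⬝ᵥ F k₁ k₂ k₃ q x y z =
      -k₁ * x ^ 2 - k₂ * y ^ 2 - k₃ * z ^ 2 + 2 * q * x * y + x * y * z) ∧
    (∀ x y z : ℝ,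
      pd1 (fun x y z => F k₁ k₂ k₃ q x y z 0) x y z
        + pd2 (fun x y z => F k₁ k₂ k₃ q x y z 1) x y z
        + pd3 (fun x y z => F k₁ k₂ k₃ q x y z 2) x y z = -(k₁ + k₂ + k₃)) ∧
    (∀ x y z : ℝ,
      (pd2 (fun x y z => (0 : ℝ)) x y z - pd3 (fun x y z => (0 : ℝ)) x y z,
       pd3 (fun x y z => x / 2) x y z - pd1 (fun x y z => (0 : ℝ)) x y z,
       pd1 (fun x y z => (0 : ℝ)) x y z - pd2 (fun x y z => x / 2) x y z)
        = ((0 : ℝ), (0 : ℝ), (0 : ℝ))) := by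
  refine ⟨fun x y z => F_eq .., fun x y z => ?_, fun x y z => ?_, fun x y z => ?_⟩
  · rw [F_eq, gradH_eq]
    simp [dotProduct, Fin.sum_univ_three]
    ring
  · have e1 : (fun x y z : ℝ => F k₁ k₂ k₃ q x y z 0)
        = fun x y z => q * y - k₁ * x + y * z := by
      funext a b c; rw [F_eq]; rfl
    have e2 : (fun x y z : ℝ => F k₁ k₂ k₃ q x y z 1)
        = fun x y z => q * x - k₂ * y - x * z := by
      funext a b c; rw [F_eq]; rfl
    have e3 : (fun x y z : ℝ => F k₁ k₂ k₃ q x y z 2)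
        = fun x y z => -k₃ * z + x * y := by
      funext a b c; rw [F_eq]; rfl
    rw [e1, e2, e3]
    have h1 : HasDerivAt (fun t : ℝ => q * y - k₁ * t + y * z) (-k₁) x := by
      simpa using ((((hasDerivAt_id x).const_mul k₁).const_sub (q * y)).add_const (y * z))
    have h2 : HasDerivAt (fun t : ℝ => q * x - k₂ * t - x * z) (-k₂) y := by
      simpa using ((((hasDerivAt_id y).const_mul k₂).const_sub (q * x)).sub_const (x * z))
    have h3 : HasDerivAt (fun t : ℝ => -k₃ * t + x * y) (-k₃) z := by
      simpa using (((hasDerivAt_id z).const_mul (-k₃)).add_const (x * y))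
    rw [pd1, pd2, pd3, h1.deriv, h2.deriv, h3.deriv]
    ring
  · simp [pd1, pd2, pd3]
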